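/- Let f(x) = |x|²/4 on ℝⁿ. For every smooth vector field Y : ℝⁿ → ℝⁿ the following four pointwise identities hold: (1) (ℒ + 1/2)(div_f Y) = −div_f(𝒫Y); (2) ℒ(∇ div_f Y) = −∇ div_f(𝒫Y); (3) (ℒ − 1/2)(Hess_{div_f Y}) = −Hess_{div_f(𝒫Y)} (entrywise); (4) ℒ(div_f* Y) = Hess_{div_f Y} − 2·div_f*(𝒫Y) (entrywise). -/

import Mathlib

open MeasureTheory Real

noncomputable section

/-- Euclidean space `ℝⁿ`. -/
abbrev En (n : ℕ) := EuclideanSpace ℝ (Fin n)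

variable {n : ℕ}

/-- Partial derivative `∂_i u` in the `i`-th coordinate direction. -/
def pd (i : Fin n) (u : En n → ℝ) (x : En n) : ℝ :=
  fderiv ℝ u x (EuclideanSpace.single i 1)

/-- Euclidean Laplacian `Δu = Σ_i ∂_i∂_i u`. -/
def lap (u : En n → ℝ) (x : En n) : ℝ := ∑ i, pd i (pd i u) x

/-- The drift Laplacian `ℒu = Δu − ⟨x/2, ∇u⟩` for the potential `f(x) = |x|²/4`. -/
def driftLap (u : En n → ℝ) (x : En n) : ℝ :=
  lap u x - ∑ i, (x i / 2) * pd i u x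

/-- The drift Laplacian acting componentwise on vector fields. -/
def driftLapV (Y : En n → Fin n → ℝ) (x : En n) (i : Fin n) : ℝ :=
  driftLap (fun y => Y y i) x

/-- The gradient `∇u` as a vector field. -/
def gradV (u : En n → ℝ) (x : En n) (i : Fin n) : ℝ := pd i u x

/-- The weighted divergence `div_f Y = div Y − ⟨Y, x/2⟩` for `f(x) = |x|²/4`. -/
def divf (Y : En n → Fin n → ℝ) (x : En n) : ℝ :=
  ∑ i, (pd i (fun y => Y y i) x - Y x i * (x i / 2))

/-- `div_f* Y`, the symmetric 2-tensor `(div_f* Y)_{ij} = −(∂_i Y_j + ∂_j Y_i)/2`. -/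
def divfStar (Y : En n → Fin n → ℝ) (x : En n) (i j : Fin n) : ℝ :=
  -(pd i (fun y => Y y j) x + pd j (fun y => Y y i) x) / 2

/-- The weighted divergence of a matrix-valued map:
`(div_f h)_i = Σ_j (∂_j h_{ij} − (x_j/2) h_{ij})`. -/
def divfT (h : En n → Fin n → Fin n → ℝ) (x : En n) (i : Fin n) : ℝ :=
  ∑ j, (pd j (fun y => h y i j) x - (x j / 2) * h x i j)

/-- The operator `𝒫 = div_f ∘ div_f*` on vector fields. -/
def Pop (Y : En n → Fin n → ℝ) : En n → Fin n → ℝ := divfT (divfStar Y)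

/-- The Hessian matrix `(Hess u)_{ij} = ∂_i ∂_j u`. -/
def hess (u : En n → ℝ) (x : En n) (i j : Fin n) : ℝ := pd i (pd j u) x

/-- The Gaussian weight `e^{-f(x)} = e^{-|x|²/4}`. -/
def gw (x : En n) : ℝ := Real.exp (-(‖x‖ ^ 2 / 4))

section Aux

variable {u v : En n → ℝ} {x : En n} {i j k : Fin n}

lemma smooth_coord (j : Fin n) : ContDiff ℝ (⊤ : ℕ∞) (fun y : En n => y j) :=
  contDiff_piLp_apply 2

lemma smooth_pd {u : En n → ℝ} (hu : ContDiff ℝ (⊤ : ℕ∞) u) (i : Fin n) :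
    ContDiff ℝ (⊤ : ℕ∞) (pd i u) :=
  (hu.fderiv_right (by simp)).clm_apply contDiff_const

lemma diffAt {u : En n → ℝ} (hu : ContDiff ℝ (⊤ : ℕ∞) u) (x : En n) : DifferentiableAt ℝ u x :=
  (hu.differentiable (by simp)).differentiableAt

lemma pd_add (hu : DifferentiableAt ℝ u x) (hv : DifferentiableAt ℝ v x) (i : Fin n) :
    pd i (fun y => u y + v y) x = pd i u x + pd i v x := by
  simp [pd, fderiv_fun_add hu hv]

lemma pd_sub (hu : DifferentiableAt ℝ u x) (hv : DifferentiableAt ℝ v x) (i : Fin n) :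
    pd i (fun y => u y - v y) x = pd i u x - pd i v x := by
  simp [pd, fderiv_fun_sub hu hv]

lemma pd_neg (i : Fin n) : pd i (fun y => -u y) x = -pd i u x := by
  simp [pd, fderiv_neg]

lemma pd_mul (hu : DifferentiableAt ℝ u x) (hv : DifferentiableAt ℝ v x) (i : Fin n) :
    pd i (fun y => u y * v y) x = u x * pd i v x + v x * pd i u x := by
  simp [pd, fderiv_fun_mul hu hv]

lemma pd_const_mul (hu : DifferentiableAt ℝ u x) (c : ℝ) (i : Fin n) :
    pd i (fun y => c * u y) x = c * pd i u x := by
  simp [pd, fderiv_const_mul hu c]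

lemma pd_div_const (hu : DifferentiableAt ℝ u x) (c : ℝ) (i : Fin n) :
    pd i (fun y => u y / c) x = pd i u x / c := by
  have h : (fun y => u y / c) = fun y => c⁻¹ * u y := by funext y; ring
  rw [h, pd_const_mul hu c⁻¹ i]; ring

lemma pd_sum {ι : Type*} {s : Finset ι} {g : ι → En n → ℝ}
    (hg : ∀ k ∈ s, DifferentiableAt ℝ (g k) x) (i : Fin n) :
    pd i (fun y => ∑ k ∈ s, g k y) x = ∑ k ∈ s, pd i (g k) x := by
  simp [pd, fderiv_fun_sum hg]

lemma pd_coord (i j : Fin n) (x : En n) :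
    pd i (fun y : En n => y j) x = if i = j then 1 else 0 := by
  have h : (fun y : En n => y j) = fun y => (EuclideanSpace.proj j : En n →L[ℝ] ℝ) y := rfl
  rw [pd, h, ContinuousLinearMap.fderiv]
  simp [EuclideanSpace.single_apply, eq_comm]

lemma pd_coord_half (i j : Fin n) (x : En n) :
    pd i (fun y : En n => y j / 2) x = (if i = j then 1 else 0) / 2 := by
  rw [pd_div_const (diffAt (smooth_coord j) x) 2 i, pd_coord]

lemma pd_comm (hu : ContDiff ℝ (⊤ : ℕ∞) u) (i j : Fin n) (x : En n) :
    pd i (pd j u) x = pd j (pd i u) x := by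
  have hd : DifferentiableAt ℝ (fderiv ℝ u) x :=
    (((hu.fderiv_right (m := (⊤ : ℕ∞)) (by simp)).differentiable (by simp)) x)
  have key : ∀ w v : En n, fderiv ℝ (fun y => fderiv ℝ u y w) x v
      = fderiv ℝ (fderiv ℝ u) x v w := by
    intro w v
    rw [fderiv_clm_apply hd (differentiableAt_const w)]
    simp
  have hsymm : IsSymmSndFDerivAt ℝ u x :=
    (hu.contDiffAt).isSymmSndFDerivAt (by rw [minSmoothness_of_isRCLikeNormedField]; exact WithTop.coe_le_coe.mpr (le_top : (2 : ℕ∞) ≤ ⊤))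
  show fderiv ℝ (fun y => fderiv ℝ u y _) x _ = fderiv ℝ (fun y => fderiv ℝ u y _) x _
  rw [key, key, hsymm.eq]

lemma pd_comm_fun (hu : ContDiff ℝ (⊤ : ℕ∞) u) (i j : Fin n) :
    pd i (pd j u) = pd j (pd i u) :=
  funext fun x => pd_comm hu i j x

lemma smooth_lap (hu : ContDiff ℝ (⊤ : ℕ∞) u) : ContDiff ℝ (⊤ : ℕ∞) (lap u) :=
  ContDiff.sum fun i _ => smooth_pd (smooth_pd hu i) i

lemma smooth_driftterm (hu : ContDiff ℝ (⊤ : ℕ∞) u) :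
    ContDiff ℝ (⊤ : ℕ∞) (fun y : En n => ∑ j, (y j / 2) * pd j u y) :=
  ContDiff.sum fun j _ => ((smooth_coord j).div_const 2).mul (smooth_pd hu j)

lemma smooth_driftLap (hu : ContDiff ℝ (⊤ : ℕ∞) u) : ContDiff ℝ (⊤ : ℕ∞) (driftLap u) :=
  (smooth_lap hu).sub (smooth_driftterm hu)

/-- Commutation: `∂ₖ ℒu = ℒ ∂ₖ u − ½ ∂ₖ u`. -/
lemma pd_driftLap (hu : ContDiff ℝ (⊤ : ℕ∞) u) (k : Fin n) (x : En n) :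
    pd k (driftLap u) x = driftLap (pd k u) x - (1/2) * pd k u x := by
  have hpd : ∀ i : Fin n, ContDiff ℝ (⊤ : ℕ∞) (pd i u) := smooth_pd hu
  have e0 : pd k (driftLap u) x
      = pd k (lap u) x - pd k (fun y => ∑ j, (y j / 2) * pd j u y) x := by
    have : driftLap u = fun y => lap u y - (fun z => ∑ j, (z j / 2) * pd j u z) y := rfl
    rw [this, pd_sub (diffAt (smooth_lap hu) x) (diffAt (smooth_driftterm hu) x) k]
  have e2 : pd k (lap u) x = lap (pd k u) x := by
    have : lap u = fun y => ∑ j, pd j (pd j u) y := rfl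
    rw [this, pd_sum (fun j _ => diffAt (smooth_pd (hpd j) j) x) k]
    refine Finset.sum_congr rfl fun j _ => ?_
    rw [pd_comm (hpd j) k j x, pd_comm_fun hu k j]
  have e4 : ∀ j : Fin n, pd k (fun y => y j / 2 * pd j u y) x
      = x j / 2 * pd j (pd k u) x + pd k u x * ((if k = j then 1 else 0) / 2) := by
    intro j
    rw [pd_mul (diffAt ((smooth_coord j).div_const 2) x) (diffAt (hpd j) x) k,
      pd_coord_half, pd_comm hu k j x]
    by_cases h : k = j <;> simp [h]
  have e3 : pd k (fun y => ∑ j, (y j / 2) * pd j u y) x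
      = (∑ j, x j / 2 * pd j (pd k u) x) + (1/2) * pd k u x := by
    rw [pd_sum (fun j _ => ((((smooth_coord j).div_const 2).mul (smooth_pd hu j)).differentiable
      (by simp)).differentiableAt) k]
    simp only [e4]
    rw [Finset.sum_add_distrib]
    congr 1
    have e5 : ∀ j : Fin n, pd k u x * ((if k = j then 1 else 0) / 2)
        = if k = j then pd k u x / 2 else 0 := by
      intro j; by_cases h : k = j <;> simp [h] <;> ring
    simp only [e5, Finset.sum_ite_eq, Finset.mem_univ, if_true]
    ring
  rw [e0, e2, e3]
  unfold driftLap
  ring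

lemma pd_mul_const (hu : DifferentiableAt ℝ u x) (c : ℝ) (i : Fin n) :
    pd i (fun y => u y * c) x = pd i u x * c := by
  have h : (fun y => u y * c) = fun y => c * u y := by funext y; ring
  rw [h, pd_const_mul hu c i]; ring

lemma driftLap_sum {ι : Type*} [Fintype ι] {g : ι → En n → ℝ}
    (hg : ∀ k, ContDiff ℝ (⊤ : ℕ∞) (g k)) (x : En n) :
    driftLap (fun y => ∑ k, g k y) x = ∑ k, driftLap (g k) x := by
  have e1 : ∀ i : Fin n, pd i (fun y => ∑ k, g k y) = fun y => ∑ k, pd i (g k) y :=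
    fun i => funext fun y => pd_sum (fun k _ => diffAt (hg k) y) i
  unfold driftLap lap
  simp only [e1]
  have e2 : ∀ i : Fin n, pd i (fun y => ∑ k, pd i (g k) y) x = ∑ k, pd i (pd i (g k)) x :=
    fun i => pd_sum (fun k _ => diffAt (smooth_pd (hg k) i) x) i
  simp only [e2]
  rw [Finset.sum_sub_distrib]
  congr 1
  · exact Finset.sum_comm
  · simp only [Finset.mul_sum]
    exact Finset.sum_comm

lemma driftLap_sub (hu : ContDiff ℝ (⊤ : ℕ∞) u) (hv : ContDiff ℝ (⊤ : ℕ∞) v) (x : En n) :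
    driftLap (fun y => u y - v y) x = driftLap u x - driftLap v x := by
  have e1 : ∀ i : Fin n, pd i (fun y => u y - v y) = fun y => pd i u y - pd i v y :=
    fun i => funext fun y => pd_sub (diffAt hu y) (diffAt hv y) i
  unfold driftLap lap
  simp only [e1]
  have e2 : ∀ i : Fin n, pd i (fun y => pd i u y - pd i v y) x
      = pd i (pd i u) x - pd i (pd i v) x :=
    fun i => pd_sub (diffAt (smooth_pd hu i) x) (diffAt (smooth_pd hv i) x) i
  simp only [e2, mul_sub, Finset.sum_sub_distrib]
  ring

lemma driftLap_const_mul (hu : ContDiff ℝ (⊤ : ℕ∞) u) (c : ℝ) (x : En n) :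
    driftLap (fun y => c * u y) x = c * driftLap u x := by
  have e1 : ∀ i : Fin n, pd i (fun y => c * u y) = fun y => c * pd i u y :=
    fun i => funext fun y => pd_const_mul (diffAt hu y) c i
  unfold driftLap lap
  simp only [e1]
  have e2 : ∀ i : Fin n, pd i (fun y => c * pd i u y) x = c * pd i (pd i u) x :=
    fun i => pd_const_mul (diffAt (smooth_pd hu i) x) c i
  simp only [e2, Finset.mul_sum, mul_sub]
  congr 1
  exact Finset.sum_congr rfl fun i _ => by ring

/-- `ℒ(xᵢ u) = xᵢ ℒu + 2 ∂ᵢu − (xᵢ/2) u`. -/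
lemma driftLap_coord_mul (hu : ContDiff ℝ (⊤ : ℕ∞) u) (i : Fin n) (x : En n) :
    driftLap (fun y => y i * u y) x
      = x i * driftLap u x + 2 * pd i u x - x i / 2 * u x := by
  have e1 : ∀ j : Fin n, pd j (fun y => y i * u y)
      = fun y => y i * pd j u y + u y * (if j = i then 1 else 0) := by
    intro j; funext y
    rw [pd_mul (diffAt (smooth_coord i) y) (diffAt hu y) j, pd_coord]
  have e1x : ∀ j : Fin n, pd j (fun y => y i * u y) x
      = x i * pd j u x + (if j = i then u x else 0) := by
    intro j; rw [e1 j]; by_cases h : j = i <;> simp [h]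
  have e2 : ∀ j : Fin n, pd j (pd j (fun y => y i * u y)) x
      = x i * pd j (pd j u) x + (if j = i then 2 * pd j u x else 0) := by
    intro j
    rw [e1 j, pd_add (((smooth_coord i).mul (smooth_pd hu j)).differentiable (by simp) x)
      ((hu.mul contDiff_const).differentiable (by simp) x) j,
      pd_mul (diffAt (smooth_coord i) x) (diffAt (smooth_pd hu j) x) j,
      pd_mul_const (diffAt hu x) _ j, pd_coord]
    by_cases h : j = i <;> simp [h] <;> ring
  unfold driftLap lap
  simp only [e1x, e2, mul_add, Finset.sum_add_distrib]
  have e3 : ∀ j : Fin n, x j / 2 * (if j = i then u x else 0)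
      = if j = i then x i / 2 * u x else 0 := by
    intro j; rcases eq_or_ne j i with h | h
    · subst h; simp
    · simp [h]
  have e4 : ∀ j : Fin n, x j / 2 * (x i * pd j u x) = x i * (x j / 2 * pd j u x) :=
    fun j => by ring
  simp only [e3, e4, Finset.sum_ite_eq, Finset.sum_ite_eq', Finset.mem_univ, if_true, ← Finset.mul_sum]
  ring


variable {Y : En n → Fin n → ℝ}

lemma smooth_divf (hY : ∀ i, ContDiff ℝ (⊤ : ℕ∞) (fun y => Y y i)) : ContDiff ℝ (⊤ : ℕ∞) (divf Y) :=
  ContDiff.sum fun i _ => (smooth_pd (hY i) i).sub ((hY i).mul ((smooth_coord i).div_const 2))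

lemma smooth_divfStar (hY : ∀ i, ContDiff ℝ (⊤ : ℕ∞) (fun y => Y y i)) (i j : Fin n) :
    ContDiff ℝ (⊤ : ℕ∞) (fun y => divfStar Y y i j) :=
  (((smooth_pd (hY j) i).add (smooth_pd (hY i) j)).neg).div_const 2

lemma smooth_Pop (hY : ∀ i, ContDiff ℝ (⊤ : ℕ∞) (fun y => Y y i)) (i : Fin n) :
    ContDiff ℝ (⊤ : ℕ∞) (fun y => Pop Y y i) := by
  have e0 : (fun y => Pop Y y i) = fun y : En n =>
      ∑ j, (pd j (fun z => divfStar Y z i j) y - (y j / 2) * divfStar Y y i j) := rfl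
  rw [e0]
  exact ContDiff.sum fun j _ => (smooth_pd (smooth_divfStar hY i j) j).sub
    (((smooth_coord j).div_const 2).mul (smooth_divfStar hY i j))

lemma divf_gradV (u : En n → ℝ) (x : En n) : divf (gradV u) x = driftLap u x := by
  unfold divf gradV driftLap lap
  rw [Finset.sum_sub_distrib]
  congr 1
  exact Finset.sum_congr rfl fun i _ => by ring

lemma divf_driftLapV (hY : ∀ i, ContDiff ℝ (⊤ : ℕ∞) (fun y => Y y i)) (x : En n) :
    divf (driftLapV Y) x = driftLap (divf Y) x + (1/2) * divf Y x := by
  have key : driftLap (divf Y) x = ∑ i, (driftLap (pd i (fun y => Y y i)) x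
      - (1/2) * (x i * driftLap (fun y => Y y i) x + 2 * pd i (fun y => Y y i) x
        - x i / 2 * Y x i)) := by
    have hg : ∀ i : Fin n,
        ContDiff ℝ (⊤ : ℕ∞) (fun y : En n => pd i (fun z => Y z i) y - Y y i * (y i / 2)) :=
      fun i => (smooth_pd (hY i) i).sub ((hY i).mul ((smooth_coord i).div_const 2))
    have e0 : divf Y = fun y => ∑ i, (pd i (fun z => Y z i) y - Y y i * (y i / 2)) := rfl
    rw [e0, driftLap_sum hg x]
    refine Finset.sum_congr rfl fun i _ => ?_
    rw [driftLap_sub (smooth_pd (hY i) i) ((hY i).mul ((smooth_coord i).div_const 2)) x]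
    congr 1
    have e1 : (fun y : En n => Y y i * (y i / 2)) = fun y => (1/2) * (y i * Y y i) := by
      funext y; ring
    rw [e1, driftLap_const_mul ((smooth_coord i).mul (hY i)) (1/2) x,
      driftLap_coord_mul (hY i) i x]
  have lhs : divf (driftLapV Y) x = ∑ i, (driftLap (pd i (fun y => Y y i)) x
      - (1/2) * pd i (fun y => Y y i) x - driftLap (fun y => Y y i) x * (x i / 2)) := by
    unfold divf driftLapV
    refine Finset.sum_congr rfl fun i _ => ?_
    rw [pd_driftLap (hY i) i x]
  rw [lhs, key]
  unfold divf
  rw [Finset.mul_sum, ← Finset.sum_add_distrib]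
  refine Finset.sum_congr rfl fun i _ => ?_
  ring

lemma pd_divfStar (hY : ∀ i, ContDiff ℝ (⊤ : ℕ∞) (fun y => Y y i)) (k i j : Fin n) (x : En n) :
    pd k (fun y => divfStar Y y i j) x
      = -(pd k (pd i (fun y => Y y j)) x + pd k (pd j (fun y => Y y i)) x) / 2 := by
  have e0 : (fun y => divfStar Y y i j)
      = fun y => -(pd i (fun z => Y z j) y + pd j (fun z => Y z i) y) / 2 := rfl
  rw [e0, pd_div_const (diffAt ((smooth_pd (hY j) i).add (smooth_pd (hY i) j)).neg x) 2 k,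
    pd_neg, pd_add (diffAt (smooth_pd (hY j) i) x) (diffAt (smooth_pd (hY i) j) x) k]

/-- `𝒫Y = −½(∇ div_f Y + ℒY) − Y/4`. -/
lemma Pop_eq (hY : ∀ i, ContDiff ℝ (⊤ : ℕ∞) (fun y => Y y i)) (x : En n) (i : Fin n) :
    Pop Y x i = -(1/2) * (pd i (divf Y) x + driftLapV Y x i) - Y x i / 4 := by
  have lhs : Pop Y x i = ∑ j, (-(1/2)) * ((pd i (pd j (fun y => Y y j)) x
        - x j / 2 * pd i (fun y => Y y j) x)
      + (pd j (pd j (fun y => Y y i)) x - x j / 2 * pd j (fun y => Y y i) x)) := by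
    show ∑ j : Fin n, (pd j (fun y => divfStar Y y i j) x - (x j / 2) * divfStar Y x i j) = _
    refine Finset.sum_congr rfl fun j _ => ?_
    rw [pd_divfStar hY j i j x, pd_comm (hY j) j i x]
    unfold divfStar
    ring
  have epd : pd i (divf Y) x = (∑ j, (pd i (pd j (fun y => Y y j)) x
      - x j / 2 * pd i (fun y => Y y j) x)) - Y x i / 2 := by
    have e0 : divf Y = fun y => ∑ j, (pd j (fun z => Y z j) y - Y y j * (y j / 2)) := rfl
    rw [e0, pd_sum (fun j _ => diffAt ((smooth_pd (hY j) j).sub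
      ((hY j).mul ((smooth_coord j).div_const 2))) x) i]
    have e1 : ∀ j : Fin n, pd i (fun y => pd j (fun z => Y z j) y - Y y j * (y j / 2)) x
        = (pd i (pd j (fun y => Y y j)) x - x j / 2 * pd i (fun y => Y y j) x)
          - (if i = j then Y x j / 2 else 0) := by
      intro j
      rw [pd_sub (diffAt (smooth_pd (hY j) j) x)
          (diffAt ((hY j).mul ((smooth_coord j).div_const 2)) x) i,
        pd_mul (diffAt (hY j) x) (diffAt ((smooth_coord j).div_const 2) x) i,
        pd_coord_half i j x]
      rcases eq_or_ne i j with h | h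
      · subst h; simp; ring
      · simp [h]
    simp only [e1, Finset.sum_sub_distrib, Finset.sum_ite_eq, Finset.mem_univ, if_true]
  have edl : driftLapV Y x i = ∑ j, (pd j (pd j (fun y => Y y i)) x
      - x j / 2 * pd j (fun y => Y y i) x) := by
    unfold driftLapV driftLap lap
    rw [Finset.sum_sub_distrib]
  rw [lhs, epd, edl]
  rw [← Finset.mul_sum, Finset.sum_add_distrib]
  ring

lemma smooth_const_mul (hu : ContDiff ℝ (⊤ : ℕ∞) u) (c : ℝ) :
    ContDiff ℝ (⊤ : ℕ∞) (fun y : En n => c * u y) := contDiff_const.mul hu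

lemma driftLap_add (hu : ContDiff ℝ (⊤ : ℕ∞) u) (hv : ContDiff ℝ (⊤ : ℕ∞) v) (x : En n) :
    driftLap (fun y => u y + v y) x = driftLap u x + driftLap v x := by
  have e1 : (fun y => u y + v y) = fun y => u y - (-1) * v y := by funext y; ring
  rw [e1, driftLap_sub hu (smooth_const_mul hv (-1)), driftLap_const_mul hv (-1) x]
  ring

lemma divf_add3 {A B C : En n → Fin n → ℝ} (a b c : ℝ)
    (hA : ∀ i, ContDiff ℝ (⊤ : ℕ∞) (fun y => A y i)) (hB : ∀ i, ContDiff ℝ (⊤ : ℕ∞) (fun y => B y i))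
    (hC : ∀ i, ContDiff ℝ (⊤ : ℕ∞) (fun y => C y i)) (x : En n) :
    divf (fun y i => a * A y i + b * B y i + c * C y i) x
      = a * divf A x + b * divf B x + c * divf C x := by
  unfold divf
  have e1 : ∀ i : Fin n, pd i (fun y => a * A y i + b * B y i + c * C y i) x
      = a * pd i (fun y => A y i) x + b * pd i (fun y => B y i) x
        + c * pd i (fun y => C y i) x := by
    intro i
    rw [pd_add (diffAt ((smooth_const_mul (hA i) a).add (smooth_const_mul (hB i) b)) x)
        (diffAt (smooth_const_mul (hC i) c) x) i,
      pd_add (diffAt (smooth_const_mul (hA i) a) x) (diffAt (smooth_const_mul (hB i) b) x) i,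
      pd_const_mul (diffAt (hA i) x) a i, pd_const_mul (diffAt (hB i) x) b i,
      pd_const_mul (diffAt (hC i) x) c i]
  simp only [e1, Finset.mul_sum, ← Finset.sum_add_distrib]
  refine Finset.sum_congr rfl fun i _ => ?_
  ring

variable (hY : ∀ i, ContDiff ℝ (⊤ : ℕ∞) (fun y => Y y i))
include hY

lemma hPop : Pop Y = fun y i => -(1/2) * pd i (divf Y) y + -(1/2) * driftLapV Y y i
    + -(1/4) * Y y i := by
  funext y i
  rw [Pop_eq hY y i]
  ring

lemma id1 (x : En n) :
    driftLap (divf Y) x + (1/2) * divf Y x = -(divf (Pop Y) x) := by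
  have h1 : divf (Pop Y) x = -(1/2) * divf (gradV (divf Y)) x
      + -(1/2) * divf (driftLapV Y) x + -(1/4) * divf Y x := by
    rw [hPop hY]
    exact divf_add3 (-(1/2)) (-(1/2)) (-(1/4))
      (fun i => smooth_pd (smooth_divf hY) i) (fun i => smooth_driftLap (hY i)) hY x
  rw [h1, divf_gradV (divf Y) x, divf_driftLapV hY x]
  ring

lemma id2 (x : En n) (i : Fin n) :
    driftLapV (gradV (divf Y)) x i = -(gradV (divf (Pop Y)) x i) := by
  have e0 : driftLapV (gradV (divf Y)) x i = driftLap (pd i (divf Y)) x := rfl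
  have e1 : driftLap (divf Y) = fun y => -(divf (Pop Y) y) - (1/2) * divf Y y := by
    funext y
    have := id1 hY y
    ring_nf
    ring_nf at this
    linarith
  have e2 : pd i (driftLap (divf Y)) x = -(pd i (divf (Pop Y)) x) - (1/2) * pd i (divf Y) x := by
    rw [e1, pd_sub (diffAt (smooth_divf (smooth_Pop hY)).neg x)
      (diffAt (smooth_const_mul (smooth_divf hY) (1/2)) x) i, pd_neg,
      pd_const_mul (diffAt (smooth_divf hY) x) (1/2) i]
  have e3 := pd_driftLap (smooth_divf hY) i x
  rw [e0]
  have : gradV (divf (Pop Y)) x i = pd i (divf (Pop Y)) x := rfl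
  rw [this]
  linarith [e2, e3]

lemma id3 (x : En n) (i j : Fin n) :
    driftLap (fun y => hess (divf Y) y i j) x - (1/2) * hess (divf Y) x i j
      = -(hess (divf (Pop Y)) x i j) := by
  have e0 : (fun y => hess (divf Y) y i j) = pd i (pd j (divf Y)) := rfl
  have e1 : driftLap (pd j (divf Y)) = fun y => -(pd j (divf (Pop Y)) y) := by
    funext y
    exact id2 hY y j
  have e2 := pd_driftLap (smooth_pd (smooth_divf hY) j) i x
  rw [e0]
  have e3 : pd i (driftLap (pd j (divf Y))) x = -(pd i (pd j (divf (Pop Y))) x) := by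
    rw [e1, pd_neg]
  unfold hess
  rw [← e3] at *
  linarith [e2]

lemma id4 (x : En n) (i j : Fin n) :
    driftLap (fun y => divfStar Y y i j) x
      = hess (divf Y) x i j - 2 * divfStar (Pop Y) x i j := by
  have e0 : (fun y => divfStar Y y i j)
      = fun y => -(1/2) * (pd i (fun z => Y z j) y + pd j (fun z => Y z i) y) := by
    funext y
    show -(pd i (fun z => Y z j) y + pd j (fun z => Y z i) y) / 2 = _
    ring
  have hA : driftLap (fun y => divfStar Y y i j) x
      = -(1/2) * (driftLap (pd i (fun z => Y z j)) x + driftLap (pd j (fun z => Y z i)) x) := by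
    rw [e0, driftLap_const_mul ((smooth_pd (hY j) i).add (smooth_pd (hY i) j)) (-(1/2)) x,
      driftLap_add (smooth_pd (hY j) i) (smooth_pd (hY i) j) x]
  have hB : ∀ k l : Fin n, driftLap (pd k (fun z => Y z l)) x
      = pd k (driftLap (fun z => Y z l)) x + (1/2) * pd k (fun z => Y z l) x := by
    intro k l
    have := pd_driftLap (hY l) k x
    linarith
  have hPopc : ∀ k l : Fin n, pd k (fun y => Pop Y y l) x
      = -(1/2) * pd k (pd l (divf Y)) x + -(1/2) * pd k (driftLap (fun z => Y z l)) x
        + -(1/4) * pd k (fun z => Y z l) x := by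
    intro k l
    have e1 : (fun y => Pop Y y l) = fun y => -(1/2) * pd l (divf Y) y
        + -(1/2) * driftLap (fun z => Y z l) y + -(1/4) * Y y l := by
      rw [hPop hY]; rfl
    rw [e1, pd_add (diffAt ((smooth_const_mul (smooth_pd (smooth_divf hY) l) (-(1/2))).add
        (smooth_const_mul (smooth_driftLap (hY l)) (-(1/2)))) x)
        (diffAt (smooth_const_mul (hY l) (-(1/4))) x) k,
      pd_add (diffAt (smooth_const_mul (smooth_pd (smooth_divf hY) l) (-(1/2))) x)
        (diffAt (smooth_const_mul (smooth_driftLap (hY l)) (-(1/2))) x) k,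
      pd_const_mul (diffAt (smooth_pd (smooth_divf hY) l) x) (-(1/2)) k,
      pd_const_mul (diffAt (smooth_driftLap (hY l)) x) (-(1/2)) k,
      pd_const_mul (diffAt (hY l) x) (-(1/4)) k]
  have hD : divfStar (Pop Y) x i j
      = -(pd i (fun y => Pop Y y j) x + pd j (fun y => Pop Y y i) x) / 2 := rfl
  rw [hA, hB i j, hB j i, hD, hPopc i j, hPopc j i]
  unfold hess
  rw [pd_comm (smooth_divf hY) j i x]
  ring

end Aux


/-- On the Gaussian soliton, for every smooth vector field `Y`:
(1) `(ℒ + 1/2)(div_f Y) = −div_f(𝒫Y)`;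
(2) `ℒ(∇ div_f Y) = −∇ div_f(𝒫Y)`;
(3) `(ℒ − 1/2)(Hess_{div_f Y}) = −Hess_{div_f(𝒫Y)}` entrywise;
(4) `ℒ(div_f* Y) = Hess_{div_f Y} − 2 div_f*(𝒫Y)` entrywise. -/
theorem stmt_6 (n : ℕ) (Y : En n → Fin n → ℝ) (hY : ContDiff ℝ (⊤ : ℕ∞) Y) :
    (∀ x : En n, driftLap (divf Y) x + (1/2) * divf Y x = -(divf (Pop Y) x)) ∧
    (∀ (x : En n) (i : Fin n),
      driftLapV (gradV (divf Y)) x i = -(gradV (divf (Pop Y)) x i)) ∧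
    (∀ (x : En n) (i j : Fin n),
      driftLap (fun y => hess (divf Y) y i j) x - (1/2) * hess (divf Y) x i j
        = -(hess (divf (Pop Y)) x i j)) ∧
    (∀ (x : En n) (i j : Fin n),
      driftLap (fun y => divfStar Y y i j) x
        = hess (divf Y) x i j - 2 * divfStar (Pop Y) x i j) := by
  have hYc : ∀ i, ContDiff ℝ (⊤ : ℕ∞) (fun y => Y y i) := fun i => (contDiff_pi.1 hY) i
  exact ⟨fun x => id1 hYc x, fun x i => id2 hYc x i,
    fun x i j => id3 hYc x i j, fun x i j => id4 hYc x i j⟩
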